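/- For n ≥ 2, the coface d¹ : Δ[n] → Δ[n+1] restricts to an isomorphism from the left cone C_n onto the intersection C_{n+1} ∩ d¹[Δ[n]] of simplicial subsets of Δ[n+1], and the inclusion C_{n+1} → C_{n+1} ∪ d¹[Δ[n]] is a pushout of the left cone inclusion c_n : C_n → Δ[n]; explicitly, the square whose top row is C_n ≅ C_{n+1} ∩ d¹[Δ[n]] ↪ C_{n+1}, whose left side is c_n, and whose bottom row is Δ[n] ≅ d¹[Δ[n]] ↪ C_{n+1} ∪ d¹[Δ[n]], is cocartesian. -/

import Mathlib

open CategoryTheory CategoryTheory.GrothendieckTopology CategoryTheory.Limits Simplicial SSet Opposite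

noncomputable section

namespace BousfieldPaper

/-! ## Basic lifting-property classes of simplicial sets -/

/-- A Kan fibration: a map with the right lifting property against all horn inclusions. -/
def KanFibration {S T : SSet.{0}} (p : S ⟶ T) : Prop :=
  ∀ (n : ℕ) (i : Fin (n + 2)), HasLiftingProperty (Λ[n + 1, i].ι) p

/-- An acyclic (trivial) Kan fibration: a map with the right lifting property against
all boundary inclusions. -/
def TrivialKanFibration {S T : SSet.{0}} (p : S ⟶ T) : Prop :=
  ∀ n : ℕ, HasLiftingProperty (∂Δ[n].ι) p

/-- The class of maps with the right lifting property against every map in `T`. -/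
def rlpOf {C : Type*} [Category C] (T : MorphismProperty C) : MorphismProperty C :=
  fun _ _ p => ∀ ⦃A B : C⦄ (i : A ⟶ B), T i → HasLiftingProperty i p

/-- The class of maps with the left lifting property against every map in `T`. -/
def llpOf {C : Type*} [Category C] (T : MorphismProperty C) : MorphismProperty C :=
  fun _ _ i => ∀ ⦃S T' : C⦄ (p : S ⟶ T'), T p → HasLiftingProperty i p

/-- The saturation `llp(rlp(S))` of a class of maps. -/
def saturationOf {C : Type*} [Category C] (S : MorphismProperty C) : MorphismProperty C :=
  llpOf (rlpOf S)

/-- The class of all horn inclusions (up to isomorphism of arrows). -/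
def HornClass : MorphismProperty SSet.{0} := fun _ _ f =>
  ∃ (n : ℕ) (i : Fin (n + 2)), Nonempty (Arrow.mk f ≅ Arrow.mk (Λ[n + 1, i].ι))

/-- The class of left horn inclusions `Λ[n,0] → Δ[n]`, `n ≥ 2` (up to isomorphism of arrows). -/
def LeftHornClass : MorphismProperty SSet.{0} := fun _ _ f =>
  ∃ n : ℕ, 2 ≤ n ∧ Nonempty (Arrow.mk f ≅ Arrow.mk (Λ[n, 0].ι))

/-- Anodyne maps: the saturation of the class of horn inclusions. -/
def Anodyne : MorphismProperty SSet.{0} := saturationOf HornClass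

/-- A weak homotopy equivalence of simplicial sets (in the Kan--Quillen sense):
a map admitting a factorization as an anodyne map followed by an acyclic Kan fibration. -/
def WeakHomotopyEquivalence {S T : SSet.{0}} (f : S ⟶ T) : Prop :=
  ∃ (Z : SSet.{0}) (i : S ⟶ Z) (p : Z ⟶ T),
    Anodyne i ∧ TrivialKanFibration p ∧ i ≫ p = f

/-! ## Saturated classes -/

/-- `f` is a retract of `g` in the arrow category. -/
def IsRetractOf {C : Type*} [Category C] {X Y X' Y' : C} (f : X ⟶ Y) (g : X' ⟶ Y') : Prop :=
  ∃ (i : Arrow.mk f ⟶ Arrow.mk g) (r : Arrow.mk g ⟶ Arrow.mk f), i ≫ r = 𝟙 _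

/-- The inclusion functor of the subposet `{x | x < j}` of `J`. -/
def iioFunctor {J : Type} [Preorder J] (j : J) : Set.Iio j ⥤ J :=
  Monotone.functor (f := fun x => (x : J)) (fun _ _ h => h)

/-- The cocone on the restriction of `F : J ⥤ C` to `{x | x < j}` with apex `F.obj j`. -/
def coconeBelow {J : Type} [Preorder J] {C : Type*} [Category C]
    (F : J ⥤ C) (j : J) : Cocone (iioFunctor j ⋙ F) where
  pt := F.obj j
  ι :=
    { app := fun x => F.map (homOfLE (le_of_lt x.2))
      naturality := fun x y g => by
        dsimp [iioFunctor, Monotone.functor]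
        rw [← F.map_comp, Category.comp_id]
        congr 1 }

/-- A class of morphisms of simplicial sets is *saturated* (weakly saturated) if it is closed
under pushouts (cobase change), retracts and transfinite compositions. -/
structure IsSaturated (A : MorphismProperty SSet.{0}) : Prop where
  pushout : ∀ ⦃X Y X' Y' : SSet.{0}⦄ (f : X ⟶ Y) (u : X ⟶ X') (v : Y ⟶ Y') (f' : X' ⟶ Y'),
    IsPushout f u v f' → A f → A f'
  retract : ∀ ⦃X Y X' Y' : SSet.{0}⦄ (f : X ⟶ Y) (g : X' ⟶ Y'),
    IsRetractOf f g → A g → A f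
  transfinite : ∀ (J : Type) (_ : LinearOrder J) (_ : SuccOrder J) (_ : OrderBot J)
    (_ : WellFoundedLT J) (F : J ⥤ SSet.{0}) (c : Cocone F) (_ : IsColimit c),
    (∀ j : J, ¬IsMax j → A (F.map (homOfLE (Order.le_succ j)))) →
    (∀ j : J, Order.IsSuccLimit j → Nonempty (IsColimit (coconeBelow F j))) →
    A (c.ι.app ⊥)

/-- Right cancellation property for monomorphisms. -/
def RightCancel (A : MorphismProperty SSet.{0}) : Prop :=
  ∀ ⦃X Y Z : SSet.{0}⦄ (u : X ⟶ Y) (v : Y ⟶ Z),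
    Mono u → Mono v → A (u ≫ v) → A u → A v

/-- Left cancellation property for monomorphisms. -/
def LeftCancel (A : MorphismProperty SSet.{0}) : Prop :=
  ∀ ⦃X Y Z : SSet.{0}⦄ (u : X ⟶ Y) (v : Y ⟶ Z),
    Mono u → Mono v → A (u ≫ v) → A v → A u

/-- 3-for-2 for monomorphisms: both left and right cancellation. -/
def ThreeForTwo (A : MorphismProperty SSet.{0}) : Prop :=
  RightCancel A ∧ LeftCancel A

/-! ## The left cone, the spine, and related subcomplexes of the standard simplex -/

/-- The left cone `C n ⊆ Δ[n]`: the union of the images of the initial edges `0 → i`. -/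
def coneSub (n : ℕ) : Subfunctor Δ[n] where
  obj m := {α | ∃ i : ℕ, 1 ≤ i ∧ i ≤ n ∧
    ∀ j, (stdSimplex.asOrderHom α j : ℕ) = 0 ∨ (stdSimplex.asOrderHom α j : ℕ) = i}
  map := by
    rintro m m' g α ⟨i, hi1, hin, h⟩
    exact ⟨i, hi1, hin, fun j => h _⟩

/-- The spine `Sp n ⊆ Δ[n]`: the union of the images of the edges `i → i+1`. -/
def spineSub (n : ℕ) : Subfunctor Δ[n] where
  obj m := {α | ∃ i : ℕ, i + 1 ≤ n ∧
    ∀ j, (stdSimplex.asOrderHom α j : ℕ) = i ∨ (stdSimplex.asOrderHom α j : ℕ) = i + 1}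
  map := by
    rintro m m' g α ⟨i, hi, h⟩
    exact ⟨i, hi, fun j => h _⟩

/-- The union `(SpC) n ⊆ Δ[n]` of the images of the `2`-simplices `{0, i, i+1}`, `0 < i < n`. -/
def spcSub (n : ℕ) : Subfunctor Δ[n] where
  obj m := {α | ∃ i : ℕ, 0 < i ∧ i + 1 ≤ n ∧
    ∀ j, (stdSimplex.asOrderHom α j : ℕ) = 0 ∨ (stdSimplex.asOrderHom α j : ℕ) = i ∨ (stdSimplex.asOrderHom α j : ℕ) = i + 1}
  map := by
    rintro m m' g α ⟨i, h₀, h₁, h⟩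
    exact ⟨i, h₀, h₁, fun j => h _⟩

/-- The canonical inclusion `k n : C n → Λ[n, 0]` of the left cone into the left horn. -/
def coneToHorn (n : ℕ) (hn : 2 ≤ n) : ((coneSub n).toFunctor : SSet.{0}) ⟶ Λ[n, 0] where
  app m := TypeCat.ofHom fun α => by
    refine ⟨α.1, ?_⟩
    obtain ⟨i, hi1, hin, h⟩ := α.2
    intro hu
    rw [Set.eq_univ_iff_forall] at hu
    obtain ⟨kv, hkv0, hkvi, hkvlt⟩ : ∃ kv : ℕ, kv ≠ 0 ∧ kv ≠ i ∧ kv < n + 1 := by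
      rcases eq_or_ne i 1 with hc | hc
      · exact ⟨2, by omega, by omega, by omega⟩
      · exact ⟨1, by omega, by omega, by omega⟩
    rcases hu ⟨kv, hkvlt⟩ with hr | h0
    · obtain ⟨j, hj⟩ := hr
      have hval := congrArg Fin.val hj
      rcases h j with h' | h' <;> simp_all
    · have := congrArg Fin.val (Set.mem_singleton_iff.1 h0)
      simp_all

/-- The nerve `IΔ^n` of the free groupoid (codiscrete groupoid) on `{0, …, n}`:
its `m`-simplices are all (not necessarily monotone) functions `Fin (m+1) → Fin (n+1)`. -/
def IDelta (n : ℕ) : SSet.{0} where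
  obj m := Fin (m.unop.len + 1) → Fin (n + 1)
  map f := TypeCat.ofHom fun α => α ∘ f.unop.toOrderHom

/-- The canonical inclusion `Δ[n] → IΔ^n`. -/
def iDeltaIncl (n : ℕ) : (Δ[n] : SSet.{0}) ⟶ IDelta n where
  app m := TypeCat.ofHom fun α => ⇑(stdSimplex.asOrderHom α)

/-- The vertex `k : Δ[0] → IΔ^n`. -/
def iDeltaVertex (n : ℕ) (k : Fin (n + 1)) : (Δ[0] : SSet.{0}) ⟶ IDelta n where
  app m := TypeCat.ofHom fun _ => fun _ => k


/-! ## Bisimplicial sets, the box product and the slash construction -/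

/-- Bisimplicial sets: presheaves of sets on `Δ × Δ`. -/
abbrev BSSet : Type 1 := (SimplexCategory × SimplexCategory)ᵒᵖ ⥤ Type

/-- The box product `A □ B` of two simplicial sets: `(A □ B)_{n,m} = A_n × B_m`. -/
def box (A B : SSet.{0}) : BSSet where
  obj nm := A.obj (op nm.unop.1) × B.obj (op nm.unop.2)
  map f := TypeCat.ofHom fun p => ⟨A.map f.unop.1.op p.1, B.map f.unop.2.op p.2⟩

/-- The box product, functorially in its second variable. -/
def boxFunctor (A : SSet.{0}) : SSet.{0} ⥤ BSSet where
  obj B := box A B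
  map g :=
    { app := fun nm => TypeCat.ofHom fun p => ⟨p.1, g.app _ p.2⟩
      naturality := fun nm nm' f => by
        ext p
        exact Prod.ext rfl (types_congr_hom (g.naturality f.unop.2.op) p.2) }

/-- The box product is natural in its first variable. -/
def boxHomLeft {A A' : SSet.{0}} (f : A ⟶ A') (B : SSet.{0}) :
    (boxFunctor A).obj B ⟶ (boxFunctor A').obj B where
  app nm := TypeCat.ofHom fun p => ⟨f.app _ p.1, p.2⟩
  naturality nm nm' g := by
    ext p
    exact Prod.ext (types_congr_hom (f.naturality g.unop.1.op) p.1) rfl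

lemma boxHomLeft_natural {A A' : SSet.{0}} (f : A ⟶ A') {B B' : SSet.{0}} (g : B ⟶ B') :
    (boxFunctor A).map g ≫ boxHomLeft f B' = boxHomLeft f B ≫ (boxFunctor A').map g := rfl

/-- The simplicial set `A \ X` with `m`-simplices the bisimplicial maps `A □ Δ[m] → X`. -/
def slash (A : SSet.{0}) (X : BSSet) : SSet.{0} :=
  SSet.stdSimplex.op ⋙ ((boxFunctor A).op ⋙ yoneda.obj X)

/-- Functoriality (contravariance) of `A \ X` in `A`. -/
def slashMap {A A' : SSet.{0}} (f : A ⟶ A') (X : BSSet) : slash A' X ⟶ slash A X :=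
  Functor.whiskerLeft SSet.stdSimplex.op
    (Functor.whiskerRight (NatTrans.op
      { app := fun B => boxHomLeft f B
        naturality := fun _ _ g => (boxHomLeft_natural f g).symm }) (yoneda.obj X))

lemma slashMap_id (A : SSet.{0}) (X : BSSet) : slashMap (𝟙 A) X = 𝟙 (slash A X) := rfl

lemma slashMap_comp {A A' A'' : SSet.{0}} (f : A ⟶ A') (g : A' ⟶ A'') (X : BSSet) :
    slashMap (f ≫ g) X = slashMap g X ≫ slashMap f X := rfl


/-! ## Columns, Reedy fibrancy, Segal and Bousfield maps -/

/-- The `n`-th column `X_n := Δ[n] \ X` of a bisimplicial set. -/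
def col (n : ℕ) (X : BSSet) : SSet.{0} := slash Δ[n] X

/-- The face map `d_i : X_{n+1} → X_n` between columns. -/
def colδ {n : ℕ} (i : Fin (n + 2)) (X : BSSet) : col (n + 1) X ⟶ col n X :=
  slashMap (SSet.stdSimplex.map (SimplexCategory.δ i)) X

/-- The degeneracy map `s_i : X_n → X_{n+1}` between columns. -/
def colσ {n : ℕ} (i : Fin (n + 1)) (X : BSSet) : col n X ⟶ col (n + 1) X :=
  slashMap (SSet.stdSimplex.map (SimplexCategory.σ i)) X

/-- A bisimplicial set is `v`-fibrant (Reedy fibrant) if `f \ X` is a Kan fibration for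
every monomorphism `f` of simplicial sets. -/
def VFibrant (X : BSSet) : Prop :=
  ∀ ⦃A B : SSet.{0}⦄ (f : A ⟶ B), Mono f → KanFibration (slashMap f X)

/-- The `n`-th Bousfield map `β_n = c_n \ X : X_n → C_n \ X`. -/
def bousfieldMap (n : ℕ) (X : BSSet) : col n X ⟶ slash (coneSub n).toFunctor X :=
  slashMap (coneSub n).ι X

/-- The `n`-th Segal map `ξ_n = sp_n \ X : X_n → Sp_n \ X`. -/
def segalMap (n : ℕ) (X : BSSet) : col n X ⟶ slash (spineSub n).toFunctor X :=
  slashMap (spineSub n).ι X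

/-- A Bousfield-Segal space: a `v`-fibrant bisimplicial set whose Bousfield maps `β_n`,
`n ≥ 2`, are weak homotopy equivalences. -/
def IsBSegal (X : BSSet) : Prop :=
  VFibrant X ∧ ∀ n : ℕ, 2 ≤ n → WeakHomotopyEquivalence (bousfieldMap n X)

/-- A Segal space: a `v`-fibrant bisimplicial set whose Segal maps `ξ_n`,
`n ≥ 2`, are weak homotopy equivalences. -/
def IsSegal (X : BSSet) : Prop :=
  VFibrant X ∧ ∀ n : ℕ, 2 ≤ n → WeakHomotopyEquivalence (segalMap n X)

/-- The map `IΔ^1 \ X → X_0` induced by the vertex `{0} : Δ[0] → IΔ^1`. -/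
def completenessMap (X : BSSet) : slash (IDelta 1) X ⟶ col 0 X :=
  slashMap (iDeltaVertex 1 0) X

/-- A complete Bousfield-Segal space. -/
def IsCompleteBSegal (X : BSSet) : Prop :=
  IsBSegal X ∧ WeakHomotopyEquivalence (completenessMap X)

/-- A bisimplicial set is homotopically constant if every map of the simplex category
induces a weak homotopy equivalence between the corresponding columns. -/
def HomotopicallyConstant (X : BSSet) : Prop :=
  ∀ ⦃a b : SimplexCategory⦄ (f : a ⟶ b),
    WeakHomotopyEquivalence (slashMap (SSet.stdSimplex.map f) X)

/-! ## Vertices, edges and the fraction operation -/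

/-- The vertices of a simplicial set. -/
def vert (S : SSet.{0}) : Type := S.obj (op (SimplexCategory.mk 0))

/-- Two vertices of a simplicial set lie in the same connected component, i.e. they have
equal classes in `π₀`. -/
def hSim (S : SSet.{0}) (a b : vert S) : Prop :=
  Relation.EqvGen (fun v w : vert S => ∃ e : S.obj (op (SimplexCategory.mk 1)),
    SimplicialObject.δ S 1 e = v ∧ SimplicialObject.δ S 0 e = w) a b

/-- The edge `0 → i` of the left cone `C n`. -/
def coneEdge (n : ℕ) (i : Fin (n + 1)) (hi : i ≠ 0) :
    (Δ[1] : SSet.{0}) ⟶ (coneSub n).toFunctor where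
  app m := TypeCat.ofHom fun β => by
    refine ⟨(SSet.stdSimplex.map (SimplexCategory.mkOfLe 0 i (Fin.zero_le i))).app m β, ?_⟩
    have hne : (i : ℕ) ≠ 0 := fun h => hi (by apply Fin.ext; simpa using h)
    refine ⟨(i : ℕ), by omega, i.is_le, fun j => ?_⟩
    have key : ∀ k : Fin 2,
        (((SimplexCategory.mkOfLe (0 : Fin (n + 1)) i (Fin.zero_le i)).toOrderHom k : Fin (n+1)) : ℕ) = 0 ∨
        (((SimplexCategory.mkOfLe (0 : Fin (n + 1)) i (Fin.zero_le i)).toOrderHom k : Fin (n+1)) : ℕ) = i := by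
      intro k
      match k with
      | 0 => left; rfl
      | 1 => right; rfl
    exact key _
  naturality m m' g := by
    ext β
    apply Subtype.ext
    exact types_congr_hom ((SSet.stdSimplex.map
      (SimplexCategory.mkOfLe 0 i (Fin.zero_le i))).naturality g) β

variable (X : BSSet)

/-- Vertex component of the restriction along the edge `0 → 2` of `C₂` (the "numerator"). -/
def eF (w : vert (slash (coneSub 2).toFunctor X)) : vert (col 1 X) :=
  (slashMap (coneEdge 2 2 (by decide)) X).app _ w

/-- Vertex component of the restriction along the edge `0 → 1` of `C₂` (the "denominator"). -/
def eG (w : vert (slash (coneSub 2).toFunctor X)) : vert (col 1 X) :=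
  (slashMap (coneEdge 2 1 (by decide)) X).app _ w

/-- Vertex component of the face map `d_i : X_1 → X_0`. -/
def dV (i : Fin 2) (f : vert (col 1 X)) : vert (col 0 X) := (colδ i X).app _ f

/-- Vertex component of the degeneracy `s_0 : X_0 → X_1`; `oneV X x` is `1_x`. -/
def oneV (x : vert (col 0 X)) : vert (col 1 X) := (colσ 0 X).app _ x

/-- The fraction operation determined by a section `μ₂` of the Bousfield map `β₂`:
`f/g := d₀ (μ₂ (f, g))`. -/
def fracV (μ₂ : slash (coneSub 2).toFunctor X ⟶ col 2 X)
    (w : vert (slash (coneSub 2).toFunctor X)) : vert (col 1 X) :=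
  (colδ 0 X).app _ (μ₂.app _ w)

lemma dV_oneV (x : vert (col 0 X)) (i : Fin 2) : dV X i (oneV X x) = x := by
  have h : colσ (0 : Fin 1) X ≫ colδ i X = 𝟙 (col 0 X) := by
    unfold colδ colσ
    erw [← slashMap_comp, ← Functor.map_comp]
    have : SimplexCategory.δ i ≫ SimplexCategory.σ (0 : Fin 1) = 𝟙 (SimplexCategory.mk 0) := by
      fin_cases i
      · exact SimplexCategory.δ_comp_σ_self
      · exact SimplexCategory.δ_comp_σ_succ
    rw [this]; erw [CategoryTheory.Functor.map_id, slashMap_id]; rfl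
  exact types_congr_hom (congrArg (fun (t : col 0 X ⟶ col 0 X) => t.app (op (SimplexCategory.mk 0)))
    h) x

/-- The identity morphism `1_x` as an element of the hom-space `X₁(x,x)`. -/
def idHom (x : vert (col 0 X)) :
    {f : vert (col 1 X) // dV X 1 f = x ∧ dV X 0 f = x} :=
  ⟨oneV X x, dV_oneV X x 1, dV_oneV X x 0⟩


/-! ## Cellularity, pushouts of coproducts, finite compositions of pushouts -/

/-- `f` is a pushout (cobase change) of `g`. -/
def IsPushoutOf {C : Type*} [Category C] {A B X Y : C} (g : A ⟶ B) (f : X ⟶ Y) : Prop :=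
  ∃ (u : A ⟶ X) (v : B ⟶ Y), IsPushout g u v f

/-- `f` is a pushout of a coproduct of maps belonging to the class `S`. -/
def IsPushoutOfCoproductOf (S : MorphismProperty SSet.{0}) {P Q : SSet.{0}} (f : P ⟶ Q) : Prop :=
  ∃ (ι : Type) (A B : ι → SSet.{0}) (g : ∀ i, A i ⟶ B i),
    (∀ i, S (g i)) ∧
      IsPushoutOf (Limits.Sigma.desc (fun i => g i ≫ Limits.Sigma.ι B i) : (∐ A) ⟶ (∐ B)) f

/-- `f` is cellular with respect to the class `S`: it is a (transfinite, here `ℕ`-indexed)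
composition of pushouts of coproducts of maps of `S`. -/
def IsCellularIn (S : MorphismProperty SSet.{0}) {X Y : SSet.{0}} (f : X ⟶ Y) : Prop :=
  ∃ (F : ℕ ⥤ SSet.{0}) (c : Cocone F) (_ : IsColimit c) (e₀ : F.obj 0 ≅ X) (e : c.pt ≅ Y),
    (∀ m : ℕ, IsPushoutOfCoproductOf S (F.map (homOfLE (Nat.le_succ m)))) ∧
      f = e₀.inv ≫ c.ι.app 0 ≫ e.hom

/-- `f` is a finite composition of pushouts of `g`. -/
inductive FinCompPushoutsOf {A B : SSet.{0}} (g : A ⟶ B) : ∀ {X Y : SSet.{0}}, (X ⟶ Y) → Prop where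
  | of {X Y : SSet.{0}} (f : X ⟶ Y) : IsPushoutOf g f → FinCompPushoutsOf g f
  /-- Precomposition with a pushout of `g`. -/
  | comp {X Y Z : SSet.{0}} (f₁ : X ⟶ Y) (f₂ : Y ⟶ Z) :
      IsPushoutOf g f₁ → FinCompPushoutsOf g f₂ → FinCompPushoutsOf g (f₁ ≫ f₂)

/-! ## Lattice operations on subpresheaves -/

variable {C : Type*} [Category C]

/-- Intersection of two subpresheaves. -/
def subInf {F : Cᵒᵖ ⥤ Type} (G G' : Subfunctor F) : Subfunctor F where
  obj U := G.obj U ∩ G'.obj U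
  map i := fun _ hx => ⟨G.map i hx.1, G'.map i hx.2⟩

/-- Union of two subpresheaves. -/
def subSup {F : Cᵒᵖ ⥤ Type} (G G' : Subfunctor F) : Subfunctor F where
  obj U := G.obj U ∪ G'.obj U
  map i := by
    rintro x (hx | hx)
    · exact Or.inl (G.map i hx)
    · exact Or.inr (G'.map i hx)

lemma subInf_le_left {F : Cᵒᵖ ⥤ Type} (G G' : Subfunctor F) : subInf G G' ≤ G :=
  fun _ => Set.inter_subset_left

lemma le_subSup_left {F : Cᵒᵖ ⥤ Type} (G G' : Subfunctor F) : G ≤ subSup G G' :=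
  fun _ => Set.subset_union_left

/-! ## The coface `d¹` and the left cone -/

/-- The coface map `d¹ : Δ[n] → Δ[n+1]`. -/
def d1Map (n : ℕ) : (Δ[n] : SSet.{0}) ⟶ Δ[n + 1] :=
  SSet.stdSimplex.map (SimplexCategory.δ 1)

/-- The restriction of `d¹` to a map `C n → C (n+1) ∩ d¹[Δ[n]]`. -/
def coneToInter (n : ℕ) : ((coneSub n).toFunctor : SSet.{0}) ⟶
    (subInf (coneSub (n + 1)) (Subfunctor.range (d1Map n))).toFunctor where
  app m := TypeCat.ofHom fun α => by
    refine ⟨(d1Map n).app m α.1, ?_, ⟨α.1, rfl⟩⟩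
    obtain ⟨i, hi1, hin, h⟩ := α.2
    refine ⟨i + 1, by omega, by omega, fun j => ?_⟩
    have key : stdSimplex.asOrderHom ((d1Map n).app m α.1) j
        = (1 : Fin (n + 2)).succAbove (stdSimplex.asOrderHom α.1 j) := rfl
    rcases h j with h' | h'
    · left
      have h0 : stdSimplex.asOrderHom α.1 j = 0 := by
        apply Fin.ext; exact h'
      rw [key, h0, Fin.succAbove_of_castSucc_lt]
      · simp
      · simp
    · right
      rw [key, Fin.succAbove_of_le_castSucc]
      · simp [Fin.val_succ, h']
      · rw [Fin.le_def]
        simpa using by omega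
  naturality m m' g := by
    ext α
    apply Subtype.ext
    exact types_congr_hom ((d1Map n).naturality g) α.1

/-! ## Horizontally constant bisimplicial sets and closure properties -/

/-- `p₁* A`: the horizontally constant bisimplicial set with `(p₁* A)_{n,m} = A_n`. -/
def pHorizontal (A : SSet.{0}) : BSSet where
  obj nm := A.obj (op nm.unop.1)
  map f := A.map f.unop.1.op

/-- A class of maps of bisimplicial sets is stable under pullbacks. -/
def StableUnderPullbacksB (F : MorphismProperty BSSet) : Prop :=
  ∀ ⦃W X Y Z : BSSet⦄ (p' : W ⟶ X) (f' : W ⟶ Z) (f : X ⟶ Y) (p : Z ⟶ Y),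
    IsPullback p' f' f p → F f → F f'

/-- A class of maps of bisimplicial sets is stable under retracts. -/
def StableUnderRetractsB (F : MorphismProperty BSSet) : Prop :=
  ∀ ⦃X Y X' Y' : BSSet⦄ (f : X ⟶ Y) (g : X' ⟶ Y'), IsRetractOf f g → F g → F f

/-- A class of maps of bisimplicial sets is closed under sequential (inverse) limits:
limits of towers of arrows belonging to the class again belong to the class. -/
def ClosedUnderSequentialLimitsB (F : MorphismProperty BSSet) : Prop :=
  ∀ (G : ℕᵒᵖ ⥤ Arrow BSSet), (∀ n : ℕᵒᵖ, F (G.obj n).hom) →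
    ∀ (c : Cone G), IsLimit c → F c.pt.hom

/-!
The coface `d¹` is a monomorphism, so it identifies `Δ[n]` with its image `d¹[Δ[n]]`; since it
shifts every nonzero vertex up by one, a simplex `y` of `Δ[n]` has `d¹ y ∈ C_{n+1}` exactly when
`y ∈ C_n`. Hence the square in question is, up to isomorphisms on its left column, the square of
subcomplexes `A ∩ B ⊆ A, B ⊆ A ∪ B` of `Δ[n+1]` with `A = C_{n+1}` and `B = d¹[Δ[n]]`, and such a
square is always a pushout.
-/

lemma val_succAbove_one {n : ℕ} (k : Fin (n + 1)) :
    ((1 : Fin (n + 2)).succAbove k : ℕ) = if (k : ℕ) = 0 then 0 else (k : ℕ) + 1 := by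
  split_ifs with hk
  · rw [Fin.succAbove_of_castSucc_lt] <;> simp [Fin.lt_def, hk]
  · rw [Fin.succAbove_of_le_castSucc, Fin.val_succ]
    rw [Fin.le_def, Fin.val_castSucc, Fin.val_one]
    omega

lemma val_asOrderHom_d1Map_app {n : ℕ} {m : SimplexCategoryᵒᵖ} (y : (Δ[n] : SSet.{0}).obj m)
    (j : Fin (m.unop.len + 1)) :
    (stdSimplex.asOrderHom ((d1Map n).app m y) j : ℕ) =
      if (stdSimplex.asOrderHom y j : ℕ) = 0 then 0 else (stdSimplex.asOrderHom y j : ℕ) + 1 :=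
  val_succAbove_one _

lemma mem_coneSub_of_d1Map_app_mem {n : ℕ} (hn : 1 ≤ n) {m : SimplexCategoryᵒᵖ}
    {y : (Δ[n] : SSet.{0}).obj m} (hy : (d1Map n).app m y ∈ (coneSub (n + 1)).obj m) :
    y ∈ (coneSub n).obj m := by
  obtain ⟨i, hi1, hin, h⟩ := hy
  -- for `i = 1` the simplex `y` is constant at `0`, so it lies on the edge `0 → 1` of `Δ[n]`
  refine ⟨max 1 (i - 1), by omega, by omega, fun j => ?_⟩
  have hj := h j
  rw [val_asOrderHom_d1Map_app] at hj
  split_ifs at hj with hy0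
  · exact Or.inl hy0
  · obtain rfl := hj.resolve_left id
    omega

instance (n : ℕ) : Mono (d1Map n) :=
  inferInstanceAs (Mono (uliftYoneda.map (SimplexCategory.δ 1)))

lemma isIso_coneToInter {n : ℕ} (hn : 1 ≤ n) : IsIso (coneToInter n) := by
  refine (NatTrans.isIso_iff_isIso_app _).2 fun m => (isIso_iff_bijective _).2 ⟨?_, ?_⟩
  · intro a b hab
    exact Subtype.ext ((mono_iff_injective ((d1Map n).app m)).1 inferInstance
      (congrArg Subtype.val hab))
  · rintro ⟨x, hx, y, rfl⟩
    exact ⟨⟨y, mem_coneSub_of_d1Map_app_mem hn hx⟩, rfl⟩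

lemma subInf_le_right {F : Cᵒᵖ ⥤ Type} (G G' : Subfunctor F) : subInf G G' ≤ G' :=
  fun _ => Set.inter_subset_right

lemma le_subSup_right {F : Cᵒᵖ ⥤ Type} (G G' : Subfunctor F) : G' ≤ subSup G G' :=
  fun _ => Set.subset_union_right

lemma isPushout_subInf_subSup {X : SSet.{0}} (A B : X.Subcomplex) :
    IsPushout (Subfunctor.homOfLe (subInf_le_left A B))
      (Subfunctor.homOfLe (subInf_le_right A B))
      (Subfunctor.homOfLe (le_subSup_left A B))
      (Subfunctor.homOfLe (le_subSup_right A B)) :=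
  Subcomplex.BicartSq.isPushout (A₁ := subInf A B) (A₄ := subSup A B) ⟨rfl, rfl⟩

/-- For `n ≥ 2`, the coface `d¹ : Δ[n] → Δ[n+1]` restricts to an isomorphism
from the left cone `C_n` onto the intersection `C_{n+1} ∩ d¹[Δ[n]]` of simplicial subsets of
`Δ[n+1]`, and the square whose top row is `C_n ≅ C_{n+1} ∩ d¹[Δ[n]] ↪ C_{n+1}`, whose left side
is `c_n`, and whose bottom row is `Δ[n] ≅ d¹[Δ[n]] ↪ C_{n+1} ∪ d¹[Δ[n]]`, is cocartesian:
the inclusion `C_{n+1} → C_{n+1} ∪ d¹[Δ[n]]` is a pushout of `c_n`. -/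
theorem cone_succ_pushout (n : ℕ) (hn : 2 ≤ n) :
    IsIso (coneToInter n) ∧
    IsPushout
      (coneToInter n ≫ Subfunctor.homOfLe
        (subInf_le_left (coneSub (n + 1)) (Subfunctor.range (d1Map n))))
      ((coneSub n).ι)
      (Subfunctor.homOfLe (le_subSup_left (coneSub (n + 1)) (Subfunctor.range (d1Map n))))
      ((subSup (coneSub (n + 1)) (Subfunctor.range (d1Map n))).lift (d1Map n)
        (fun _ _ hx => Or.inr hx)) := by
  have hiso : IsIso (coneToInter n) := isIso_coneToInter (by omega)
  refine ⟨hiso, ?_⟩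
  have hsq : IsPushout (coneToInter n) (coneSub n).ι
      (Subfunctor.homOfLe (subInf_le_right (coneSub (n + 1)) (Subfunctor.range (d1Map n))))
      (Subfunctor.toRange (d1Map n)) :=
    IsPushout.of_horiz_isIso ⟨rfl⟩
  exact hsq.paste_horiz (isPushout_subInf_subSup _ _)

end BousfieldPaper
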